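/- (Key integral identity underlying Proposition 1; Lemma 1 of Székely–Rizzo used in the proof) For every integer p ≥ 1 and every x ∈ ℝ^p, the Lebesgue integral ∫_{ℝ^p} (1 − cos⟨t, x⟩) / ‖t‖₂^{1+p} dt converges and equals C_p ‖x‖₂, where C_p = π^{(1+p)/2} / Γ((1+p)/2). -/

import Mathlib

open MeasureTheory

noncomputable section

open Real Set Filter

variable {p : ℕ}

local notation "V" => EuclideanSpace ℝ (Fin p)

lemma aux_J_meas {a : ℝ} :
    Measurable (fun r : ℝ => r ^ (-(1:ℝ)/2) * (1 - Real.exp (-(a / r)))) := by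
  fun_prop

lemma aux_J_integrable {a : ℝ} (ha : 0 ≤ a) :
    IntegrableOn (fun r : ℝ => r ^ (-(1:ℝ)/2) * (1 - Real.exp (-(a / r)))) (Ioi 0) := by
  have key : ∀ r : ℝ, 0 < r → 0 ≤ 1 - Real.exp (-(a / r)) ∧ 1 - Real.exp (-(a / r)) ≤ 1 ∧
      1 - Real.exp (-(a / r)) ≤ a / r := by
    intro r hr
    have h1 : Real.exp (-(a / r)) ≤ 1 := by
      rw [Real.exp_le_one_iff, neg_nonpos]; positivity
    have h2 : 0 < Real.exp (-(a / r)) := Real.exp_pos _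
    have h3 : 1 + -(a / r) ≤ Real.exp (-(a / r)) := by
      have := Real.add_one_le_exp (-(a / r)); linarith
    constructor
    · linarith
    constructor
    · linarith
    · linarith
  rw [← Ioc_union_Ioi_eq_Ioi (zero_le_one (α := ℝ))]
  refine IntegrableOn.union ?_ ?_
  · -- on Ioc 0 1, dominate by r ^ (-1/2)
    have hint : IntegrableOn (fun r : ℝ => r ^ (-(1:ℝ)/2)) (Ioc 0 1) := by
      have := (intervalIntegral.intervalIntegrable_rpow' (a := 0) (b := 1)
        (r := -(1:ℝ)/2) (by norm_num))
      rwa [intervalIntegrable_iff_integrableOn_Ioc_of_le zero_le_one] at this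
    refine Integrable.mono' hint ((aux_J_meas (a := a)).aestronglyMeasurable.restrict) ?_
    filter_upwards [ae_restrict_mem measurableSet_Ioc] with r hr
    have hr0 : (0:ℝ) < r := hr.1
    have := key r hr0
    have h4 : (0:ℝ) ≤ r ^ (-(1:ℝ)/2) := Real.rpow_nonneg hr0.le _
    rw [Real.norm_eq_abs, abs_mul, abs_of_nonneg h4, abs_of_nonneg this.1]
    nlinarith [this.2.1]
  · -- on Ioi 1, dominate by a * r ^ (-3/2)
    have hint : IntegrableOn (fun r : ℝ => a * r ^ (-(3:ℝ)/2)) (Ioi 1) :=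
      (integrableOn_Ioi_rpow_of_lt (by norm_num) zero_lt_one).const_mul a
    refine Integrable.mono' hint ((aux_J_meas (a := a)).aestronglyMeasurable.restrict) ?_
    filter_upwards [ae_restrict_mem measurableSet_Ioi] with r hr
    have hr0 : (0:ℝ) < r := lt_trans zero_lt_one hr
    obtain ⟨k1, k2, k3⟩ := key r hr0
    have h4 : (0:ℝ) ≤ r ^ (-(1:ℝ)/2) := Real.rpow_nonneg hr0.le _
    rw [Real.norm_eq_abs, abs_mul, abs_of_nonneg h4, abs_of_nonneg k1]
    have : r ^ (-(1:ℝ)/2) * (a / r) = a * r ^ (-(3:ℝ)/2) := by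
      rw [show (-(3:ℝ)/2) = (-(1:ℝ)/2) + (-1) by norm_num, Real.rpow_add hr0,
        Real.rpow_neg_one]
      field_simp
    calc r ^ (-(1:ℝ)/2) * (1 - Real.exp (-(a / r))) ≤ r ^ (-(1:ℝ)/2) * (a / r) := by
          exact mul_le_mul_of_nonneg_left k3 h4
      _ = a * r ^ (-(3:ℝ)/2) := this

lemma aux_exp_Ioc {r a : ℝ} (hr : 0 < r) (ha : 0 ≤ a) :
    ∫ v in Ioc 0 a, Real.exp (-(v / r)) = r * (1 - Real.exp (-(a / r))) := by
  rw [← intervalIntegral.integral_of_le ha]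
  have hderiv : ∀ v ∈ uIcc (0:ℝ) a, HasDerivAt (fun v : ℝ => -r * Real.exp (-(v / r)))
      (Real.exp (-(v / r))) v := by
    intro v _
    have h1 : HasDerivAt (fun v : ℝ => -(v / r)) (-(1 / r)) v := by
      exact ((hasDerivAt_id v).div_const r).neg
    have h2 := (Real.hasDerivAt_exp (-(v / r))).comp v h1
    have h3 := h2.const_mul (-r)
    refine h3.congr_deriv ?_
    rw [mul_comm (Real.exp _), ← mul_assoc, neg_mul_neg, mul_one_div_cancel hr.ne', one_mul]
  have hcont : IntervalIntegrable (fun v : ℝ => Real.exp (-(v / r))) volume 0 a :=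
    (Real.continuous_exp.comp (by fun_prop)).intervalIntegrable 0 a
  rw [intervalIntegral.integral_eq_sub_of_hasDerivAt hderiv hcont]
  simp [mul_comm]
  ring

lemma aux_subst {v : ℝ} (hv : 0 < v) :
    ∫ r in Ioi 0, r ^ (-(3:ℝ)/2) * Real.exp (-(v / r)) = Real.sqrt π * v ^ (-(1:ℝ)/2) := by
  have hkey := integral_comp_rpow_Ioi (fun y : ℝ => y ^ ((1:ℝ)/2 - 1) * Real.exp (-(v * y)))
    (p := -1) (by norm_num)
  have hgamma := Real.integral_rpow_mul_exp_neg_mul_Ioi (a := (1:ℝ)/2) (r := v)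
    (by norm_num) hv
  rw [hgamma] at hkey
  have heq : ∀ x ∈ Ioi (0:ℝ),
      (|(-1:ℝ)| * x ^ ((-1:ℝ) - 1)) • ((fun y : ℝ => y ^ ((1:ℝ)/2 - 1) * Real.exp (-(v * y))) (x ^ (-1:ℝ)))
        = x ^ (-(3:ℝ)/2) * Real.exp (-(v / x)) := by
    intro x hx
    have hx0 : (0:ℝ) < x := hx
    simp only [smul_eq_mul, abs_neg, abs_one, Real.rpow_neg_one]
    rw [Real.inv_rpow hx0.le, ← Real.rpow_neg hx0.le, one_mul, ← div_eq_mul_inv,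
      ← mul_assoc, ← Real.rpow_add hx0]
    norm_num
  rw [setIntegral_congr_fun measurableSet_Ioi heq] at hkey
  rw [hkey, Real.Gamma_one_half_eq, one_div, Real.inv_rpow hv.le, ← Real.rpow_neg hv.le]
  ring_nf

lemma aux_slice_eq {a : ℝ} (ha : 0 < a) {r : ℝ} (hr : 0 < r) :
    ∫ v in Ioc 0 a, r ^ (-(3:ℝ)/2) * Real.exp (-(v / r))
      = r ^ (-(1:ℝ)/2) * (1 - Real.exp (-(a / r))) := by
  rw [integral_const_mul, aux_exp_Ioc hr ha.le, ← mul_assoc]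
  congr 1
  rw [show (-(1:ℝ)/2) = -(3:ℝ)/2 + 1 by norm_num, Real.rpow_add hr, Real.rpow_one]

lemma aux_J {a : ℝ} (ha : 0 < a) :
    ∫ r in Ioi 0, r ^ (-(1:ℝ)/2) * (1 - Real.exp (-(a / r)))
      = Real.sqrt π * (2 * Real.sqrt a) := by
  set f : ℝ → ℝ → ℝ := fun r v => r ^ (-(3:ℝ)/2) * Real.exp (-(v / r)) with hf
  have hmeas : AEStronglyMeasurable (Function.uncurry f)
      ((volume.restrict (Ioi 0)).prod (volume.restrict (Ioc 0 a))) := by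
    apply Measurable.aestronglyMeasurable
    apply Measurable.mul
    · fun_prop
    · fun_prop
  have hslice : ∀ᵐ r ∂(volume.restrict (Ioi (0:ℝ))),
      Integrable (fun v => f r v) (volume.restrict (Ioc 0 a)) := by
    filter_upwards [ae_restrict_mem measurableSet_Ioi] with r hr
    exact ((continuous_const.mul (Real.continuous_exp.comp (by fun_prop))).integrableOn_Ioc)
  have hnorm : Integrable (fun r => ∫ v in Ioc 0 a, ‖f r v‖)
      (volume.restrict (Ioi 0)) := by
    refine (aux_J_integrable ha.le).congr ?_
    filter_upwards [ae_restrict_mem measurableSet_Ioi] with r hr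
    have hr0 : (0:ℝ) < r := hr
    have : ∀ v, ‖f r v‖ = f r v := by
      intro v
      rw [Real.norm_eq_abs, abs_of_nonneg]
      positivity
    rw [funext this] at *
    exact ((aux_slice_eq ha hr0)).symm
  have hint : Integrable (Function.uncurry f)
      ((volume.restrict (Ioi 0)).prod (volume.restrict (Ioc 0 a))) := by
    rw [integrable_prod_iff hmeas]
    exact ⟨hslice, hnorm⟩
  have hswap := integral_integral_swap (f := f) hint
  have hL : ∫ r in Ioi 0, ∫ v in Ioc 0 a, f r v
      = ∫ r in Ioi 0, r ^ (-(1:ℝ)/2) * (1 - Real.exp (-(a / r))) := by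
    refine integral_congr_ae ?_
    filter_upwards [ae_restrict_mem measurableSet_Ioi] with r hr
    exact aux_slice_eq ha hr
  have hR : ∫ v in Ioc 0 a, ∫ r in Ioi 0, f r v
      = ∫ v in Ioc 0 a, Real.sqrt π * v ^ (-(1:ℝ)/2) := by
    refine integral_congr_ae ?_
    filter_upwards [ae_restrict_mem measurableSet_Ioc] with v hv
    exact aux_subst hv.1
  have hval : ∫ v in Ioc 0 a, Real.sqrt π * v ^ (-(1:ℝ)/2)
      = Real.sqrt π * (2 * Real.sqrt a) := by
    rw [integral_const_mul]
    congr 1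
    rw [← intervalIntegral.integral_of_le ha.le,
      integral_rpow (Or.inl (by norm_num : (-1:ℝ) < -(1:ℝ)/2)),
      Real.zero_rpow (by norm_num), Real.sqrt_eq_rpow]
    norm_num
    ring
  rw [← hL, hswap, hR, hval]

lemma aux_gauss_int {r : ℝ} (hr : 0 < r) :
    Integrable (fun t : V => Real.exp (-(r * ‖t‖^2))) := by
  have hb : 0 < ((r:ℂ)).re := by simpa using hr
  have h := (GaussianFourier.integrable_cexp_neg_mul_sq_norm_add hb 0 (0 : V)).norm
  refine Integrable.congr h (Filter.Eventually.of_forall fun v => ?_)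
  simp only [Complex.norm_exp]
  norm_num
  left
  norm_cast

lemma aux_cos_gauss_int (x : V) {r : ℝ} (hr : 0 < r) :
    Integrable (fun t : V => Real.cos (inner ℝ t x) * Real.exp (-(r * ‖t‖^2))) := by
  have hb : 0 < ((r:ℂ)).re := by simpa using hr
  have h := (GaussianFourier.integrable_cexp_neg_mul_sq_norm_add hb Complex.I (x : V)).re
  refine Integrable.congr h (Filter.Eventually.of_forall fun v => ?_)
  simp only [RCLike.re_to_complex, Complex.exp_re]
  have h1 : ((-(r:ℂ) * (‖v‖:ℂ)^2 + Complex.I * ((inner ℝ x v : ℝ) : ℂ))).re = -(r * ‖v‖^2) := by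
    simp; norm_cast; exact Or.inl rfl
  have h2 : ((-(r:ℂ) * (‖v‖:ℂ)^2 + Complex.I * ((inner ℝ x v : ℝ) : ℂ))).im = (inner ℝ x v : ℝ) := by
    simp
    right
    rw [← Complex.ofReal_pow]
    exact Complex.ofReal_im _
  rw [h1, h2, real_inner_comm]
  ring

lemma aux_re_point (x v : V) (r : ℝ) :
    (Complex.exp (-(r:ℂ) * (‖v‖:ℂ)^2 + Complex.I * ((inner ℝ x v : ℝ):ℂ))).re
      = Real.cos (inner ℝ v x) * Real.exp (-(r * ‖v‖^2)) := by
  rw [Complex.exp_re]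
  have h1 : ((-(r:ℂ) * (‖v‖:ℂ)^2 + Complex.I * ((inner ℝ x v : ℝ) : ℂ))).re = -(r * ‖v‖^2) := by
    simp; norm_cast; exact Or.inl rfl
  have h2 : ((-(r:ℂ) * (‖v‖:ℂ)^2 + Complex.I * ((inner ℝ x v : ℝ) : ℂ))).im = (inner ℝ x v : ℝ) := by
    simp
    right
    rw [← Complex.ofReal_pow]
    exact Complex.ofReal_im _
  rw [h1, h2, real_inner_comm]
  ring

lemma aux_cos_gauss_val (x : V) {r : ℝ} (hr : 0 < r) :
    ∫ t : V, Real.cos (inner ℝ t x) * Real.exp (-(r * ‖t‖^2))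
      = (π / r) ^ ((p:ℝ)/2) * Real.exp (-(‖x‖^2 / (4*r))) := by
  have hb : 0 < ((r:ℂ)).re := by simpa using hr
  have hint := GaussianFourier.integrable_cexp_neg_mul_sq_norm_add hb Complex.I (x : V)
  have hval := GaussianFourier.integral_cexp_neg_mul_sq_norm_add hb Complex.I (x : V)
  have hre := congrArg Complex.re hval
  have hLHS : (∫ v : V, Complex.exp (-(r:ℂ) * (‖v‖:ℂ)^2 + Complex.I * ((inner ℝ x v : ℝ):ℂ))).re
      = ∫ t : V, Real.cos (inner ℝ t x) * Real.exp (-(r * ‖t‖^2)) := by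
    simp only [← RCLike.re_to_complex]
    rw [← integral_re hint]
    exact integral_congr_ae (Filter.Eventually.of_forall fun v => aux_re_point x v r)
  have hRHS : ((((π:ℂ))/(r:ℂ)) ^ ((Module.finrank ℝ (EuclideanSpace ℝ (Fin p)) : ℂ)/2)
      * Complex.exp (Complex.I^2 * (‖x‖:ℂ)^2 / (4 * (r:ℂ)))).re
      = (π / r) ^ ((p:ℝ)/2) * Real.exp (-(‖x‖^2 / (4*r))) := by
    rw [Complex.I_sq, finrank_euclideanSpace_fin]
    rw [show ((-1 : ℂ) * (‖x‖:ℂ)^2 / (4 * (r:ℂ))) = ((-(‖x‖^2 / (4*r)) : ℝ) : ℂ) by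
      push_cast; ring]
    rw [show (((π:ℂ))/(r:ℂ)) = ((π/r : ℝ) : ℂ) by push_cast; ring]
    rw [show ((p:ℕ) : ℂ)/2 = (((p:ℝ)/2 : ℝ) : ℂ) by push_cast; ring]
    rw [← Complex.ofReal_cpow (by positivity) ((p:ℝ)/2), ← Complex.ofReal_exp,
      ← Complex.ofReal_mul, Complex.ofReal_re]
  rw [← hLHS, hre, hRHS]

lemma aux_slice_int (x : V) {r : ℝ} (hr : 0 < r) :
    Integrable (fun t : V => r ^ (((1:ℝ) + p)/2 - 1) * Real.exp (-(r * ‖t‖^2))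
      * (1 - Real.cos (inner ℝ t x))) := by
  refine (((aux_gauss_int hr).sub (aux_cos_gauss_int x hr)).const_mul
    (r ^ (((1:ℝ) + p)/2 - 1))).congr (Filter.Eventually.of_forall fun t => ?_)
  simp only [Pi.sub_apply]
  ring

lemma aux_slice_val (x : V) {r : ℝ} (hr : 0 < r) :
    ∫ t : V, r ^ (((1:ℝ) + p)/2 - 1) * Real.exp (-(r * ‖t‖^2)) * (1 - Real.cos (inner ℝ t x))
      = π ^ ((p:ℝ)/2) * (r ^ (-(1:ℝ)/2) * (1 - Real.exp (-(‖x‖^2/4 / r)))) := by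
  have h1 : ∫ t : V, r ^ (((1:ℝ) + p)/2 - 1) * Real.exp (-(r * ‖t‖^2))
        * (1 - Real.cos (inner ℝ t x))
      = r ^ (((1:ℝ) + p)/2 - 1) * ∫ t : V, (Real.exp (-(r * ‖t‖^2))
        - Real.cos (inner ℝ t x) * Real.exp (-(r * ‖t‖^2))) := by
    rw [← integral_const_mul]
    exact integral_congr_ae (Filter.Eventually.of_forall fun t => by ring)
  rw [h1, integral_sub (aux_gauss_int hr) (aux_cos_gauss_int x hr), aux_cos_gauss_val x hr]
  have h2 : ∫ t : V, Real.exp (-(r * ‖t‖^2)) = (π / r) ^ ((p:ℝ)/2) := by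
    have h : ∫ v : EuclideanSpace ℝ (Fin p), Real.exp (-r * ‖v‖^2)
        = (π/r) ^ ((Module.finrank ℝ (EuclideanSpace ℝ (Fin p)) : ℝ)/2) :=
      GaussianFourier.integral_rexp_neg_mul_sq_norm hr
    rw [finrank_euclideanSpace_fin] at h
    rw [← h]
    exact integral_congr_ae (Filter.Eventually.of_forall fun t => by simp only [neg_mul])
  rw [h2, Real.div_rpow pi_pos.le hr.le]
  have h3 : r ^ (((1:ℝ) + p)/2 - 1) / r ^ ((p:ℝ)/2) = r ^ (-(1:ℝ)/2) := by
    rw [← Real.rpow_sub hr]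
    congr 1
    ring
  have h4 : ‖x‖^2 / (4*r) = ‖x‖^2/4 / r := by ring
  rw [h4, ← h3]
  have h5 : r ^ ((p:ℝ)/2) ≠ 0 := ne_of_gt (Real.rpow_pos_of_pos hr _)
  field_simp

lemma aux_r_int (t : V) (ht : t ≠ 0) (C : ℝ) :
    ∫ r in Ioi 0, r ^ (((1:ℝ) + p)/2 - 1) * Real.exp (-(r * ‖t‖^2)) * C
      = Real.Gamma (((1:ℝ) + p)/2) * (C / ‖t‖^(1+p)) := by
  have hnt : (0:ℝ) < ‖t‖ := norm_pos_iff.mpr ht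
  have hs : (0:ℝ) < ((1:ℝ) + p)/2 := by positivity
  have hfe : (fun r : ℝ => r ^ (((1:ℝ) + p)/2 - 1) * Real.exp (-(r * ‖t‖^2)) * C)
      = fun r : ℝ => (r ^ (((1:ℝ) + p)/2 - 1) * Real.exp (-(‖t‖^2 * r))) * C := by
    funext r; rw [mul_comm r (‖t‖^2)]
  rw [hfe, integral_mul_const, Real.integral_rpow_mul_exp_neg_mul_Ioi hs (by positivity : (0:ℝ) < ‖t‖^2)]
  have key : ((1:ℝ)/‖t‖^2) ^ (((1:ℝ) + p)/2) = (‖t‖^(1+p) : ℝ)⁻¹ := by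
    rw [one_div, ← Real.rpow_natCast ‖t‖ 2, Real.inv_rpow (Real.rpow_nonneg hnt.le _),
      ← Real.rpow_mul hnt.le, ← Real.rpow_natCast ‖t‖ (1+p)]
    congr 1
    push_cast
    ring_nf
  rw [key, div_eq_mul_inv]
  ring

/-- The constant `C_p = π^((1+p)/2) / Γ((1+p)/2)`. -/
def Cp (p : ℕ) : ℝ := Real.pi ^ (((1 : ℝ) + p) / 2) / Real.Gamma (((1 : ℝ) + p) / 2)

/-- Lemma 1 of Székely–Rizzo: for every `x ∈ ℝ^p`, the integral
`∫ (1 − cos⟨t, x⟩) / ‖t‖^(1+p) dt` over `ℝ^p` converges and equals `C_p ‖x‖`. -/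
theorem integral_one_sub_cos_inner_div_norm_pow (p : ℕ) (hp : 1 ≤ p)
    (x : EuclideanSpace ℝ (Fin p)) :
    Integrable (fun t : EuclideanSpace ℝ (Fin p) =>
        (1 - Real.cos (inner ℝ t x)) / ‖t‖ ^ (1 + p)) ∧
      ∫ t : EuclideanSpace ℝ (Fin p),
        (1 - Real.cos (inner ℝ t x)) / ‖t‖ ^ (1 + p) = Cp p * ‖x‖ := by
  by_cases hx : x = 0
  · subst hx
    have hz : (fun t : EuclideanSpace ℝ (Fin p) =>
        (1 - Real.cos (inner ℝ t (0 : EuclideanSpace ℝ (Fin p)))) / ‖t‖ ^ (1 + p))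
        = fun _ => (0:ℝ) := by
      funext t
      simp [inner_zero_right]
    rw [hz]
    exact ⟨integrable_zero _ _ _, by simp⟩
  -- main case
  haveI : Nonempty (Fin p) := ⟨⟨0, hp⟩⟩
  have hx' : (0:ℝ) < ‖x‖ := norm_pos_iff.mpr hx
  set s : ℝ := ((1:ℝ) + p)/2 with hs_def
  have hs : 0 < s := by positivity
  have hΓ : 0 < Real.Gamma s := Real.Gamma_pos_of_pos hs
  set a : ℝ := ‖x‖^2/4 with ha_def
  have ha : 0 < a := by positivity
  set F : ℝ → EuclideanSpace ℝ (Fin p) → ℝ := fun r t =>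
    r ^ (s - 1) * Real.exp (-(r * ‖t‖^2)) * (1 - Real.cos (inner ℝ t x)) with hF_def
  set g : EuclideanSpace ℝ (Fin p) → ℝ := fun t =>
    (1 - Real.cos (inner ℝ t x)) / ‖t‖ ^ (1 + p) with hg_def
  have hFmeas : AEStronglyMeasurable (Function.uncurry F)
      ((volume.restrict (Ioi 0)).prod volume) := by
    have hm1 : Measurable fun q : ℝ × EuclideanSpace ℝ (Fin p) =>
        q.1 ^ (s - 1) * Real.exp (-(q.1 * ‖q.2‖^2)) := by fun_prop
    have hm2 : Continuous fun q : ℝ × EuclideanSpace ℝ (Fin p) =>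
        1 - Real.cos (inner ℝ q.2 x) :=
      continuous_const.sub (Real.continuous_cos.comp (continuous_snd.inner continuous_const))
    exact ((hm1.mul hm2.measurable).aestronglyMeasurable)
  have hslice : ∀ᵐ r ∂(volume.restrict (Ioi (0:ℝ))),
      Integrable (fun t => Function.uncurry F (r, t)) volume := by
    filter_upwards [ae_restrict_mem measurableSet_Ioi] with r hr
    exact aux_slice_int x hr
  have hnormInt : Integrable (fun r => ∫ t, ‖Function.uncurry F (r, t)‖)
      (volume.restrict (Ioi 0)) := by
    refine (((aux_J_integrable ha.le).const_mul (π ^ ((p:ℝ)/2))).congr ?_)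
    filter_upwards [ae_restrict_mem measurableSet_Ioi] with r hr
    have h1 : ∀ t : EuclideanSpace ℝ (Fin p), ‖Function.uncurry F (r, t)‖ = F r t := by
      intro t
      have h2 : Real.cos (inner ℝ t x) ≤ 1 := Real.cos_le_one _
      have h3 : (0:ℝ) ≤ r ^ (s - 1) := Real.rpow_nonneg (le_of_lt hr) _
      have h4 : (0:ℝ) < Real.exp (-(r * ‖t‖^2)) := Real.exp_pos _
      have h5 : (0:ℝ) ≤ F r t :=
        mul_nonneg (mul_nonneg h3 h4.le) (by linarith)
      rw [Real.norm_eq_abs]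
      exact abs_of_nonneg h5
    simp only [h1]
    exact (aux_slice_val x hr).symm
  have hFint : Integrable (Function.uncurry F) ((volume.restrict (Ioi 0)).prod volume) :=
    (integrable_prod_iff hFmeas).mpr ⟨hslice, hnormInt⟩
  have hswap : ∫ r in Ioi 0, ∫ t, F r t = ∫ t, ∫ r in Ioi 0, F r t :=
    integral_integral_swap hFint
  have hL : ∫ r in Ioi 0, ∫ t, F r t = π ^ ((p:ℝ)/2) * (Real.sqrt π * (2 * Real.sqrt a)) := by
    have h1 : ∫ r in Ioi 0, ∫ t, F r t
        = ∫ r in Ioi 0, π ^ ((p:ℝ)/2) * (r ^ (-(1:ℝ)/2) * (1 - Real.exp (-(a / r)))) := by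
      refine integral_congr_ae ?_
      filter_upwards [ae_restrict_mem measurableSet_Ioi] with r hr
      exact aux_slice_val x hr
    rw [h1, integral_const_mul, aux_J ha]
  have hae0 : ∀ᵐ t : EuclideanSpace ℝ (Fin p) ∂volume, t ≠ 0 := by
    rw [ae_iff]
    simp only [not_not]
    rw [show {t : EuclideanSpace ℝ (Fin p) | t = 0} = {0} from rfl]
    exact measure_singleton _
  have haeEq : (fun t => ∫ r in Ioi 0, F r t) =ᵐ[(volume : Measure (EuclideanSpace ℝ (Fin p)))]
      (fun t => Real.Gamma s * g t) := by
    filter_upwards [hae0] with t ht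
    exact aux_r_int t ht _
  have hgint' : Integrable (fun t : EuclideanSpace ℝ (Fin p) => Real.Gamma s * g t) volume :=
    (hFint.integral_prod_right).congr haeEq
  have hgint : Integrable g volume := by
    refine (hgint'.const_mul (Real.Gamma s)⁻¹).congr
      (Filter.Eventually.of_forall fun t => ?_)
    field_simp
  have hR : ∫ t, ∫ r in Ioi 0, F r t = Real.Gamma s * ∫ t, g t := by
    rw [integral_congr_ae haeEq, integral_const_mul]
  have hsq : Real.sqrt a = ‖x‖ / 2 := by
    rw [show a = (‖x‖/2)^2 by rw [ha_def]; ring]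
    exact Real.sqrt_sq (by positivity)
  have hpi : π ^ ((p:ℝ)/2) * Real.sqrt π = π ^ s := by
    rw [Real.sqrt_eq_rpow, ← Real.rpow_add pi_pos]
    congr 1
    rw [hs_def]
    ring
  have hval : Real.Gamma s * ∫ t, g t = π ^ s * ‖x‖ := by
    rw [← hR, ← hswap, hL, hsq]
    rw [← hpi]
    ring
  constructor
  · exact hgint
  · have : ∫ t, g t = π ^ s / Real.Gamma s * ‖x‖ := by
      field_simp at hval ⊢
      linarith [hval]
    rw [hg_def] at this
    rw [this]
    rfl

end
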